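/- arXiv:1502.04336 — 9 statements merged into one kernel-verified Lean document; each statement's English description precedes it below -/
import Mathlib

section
/- Let I be a type and C a family of subsets of I that contains the whole set I and is closed under intersections of arbitrary nonempty subfamilies (a closure system on the power set of I). Then for all a, b ∈ C, the inclusion b ⊆ a holds if and only if the functional dependence a → b holds on the tuples indexed by C, i.e. if and only if for all c₁, c₂ ∈ C, a ∩ c₁ = a ∩ c₂ implies b ∩ c₁ = b ∩ c₂. -/
theorem functional_dependence_iff_subset_general {I : Type*} (C : Set (Set I))
    (huniv : Set.univ ∈ C)
    (a : Set I) (ha : a ∈ C) (b : Set I) :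
    b ⊆ a ↔ ∀ c₁ ∈ C, ∀ c₂ ∈ C, a ∩ c₁ = a ∩ c₂ → b ∩ c₁ = b ∩ c₂ := by
  refine ⟨fun hba c₁ _ c₂ _ h => ?_, fun h => ?_⟩
  · rw [← Set.inter_eq_left.mpr hba, Set.inter_assoc, h, ← Set.inter_assoc]
  · have hagree : a ∩ a = a ∩ Set.univ := by rw [Set.inter_self, Set.inter_univ]
    exact Set.inter_eq_left.mp ((h a ha Set.univ huniv hagree).trans (Set.inter_univ b))

/-- Armstrong completeness for closure systems: for closed sets `a, b` of a closure
system `C` on the power set of `I`, inclusion `b ⊆ a` holds iff the functional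
dependence `a → b` holds on the tuples indexed by the closed sets, i.e. iff for all
`c₁, c₂ ∈ C`, `a ∩ c₁ = a ∩ c₂` implies `b ∩ c₁ = b ∩ c₂`. -/
theorem functional_dependence_iff_subset {I : Type*} (C : Set (Set I))
    (huniv : Set.univ ∈ C)
    (hinter : ∀ D ⊆ C, D.Nonempty → ⋂₀ D ∈ C)
    (a : Set I) (ha : a ∈ C) (b : Set I) (hb : b ∈ C) :
    b ⊆ a ↔ ∀ c₁ ∈ C, ∀ c₂ ∈ C, a ∩ c₁ = a ∩ c₂ → b ∩ c₁ = b ∩ c₂ :=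
  functional_dependence_iff_subset_general C huniv a ha b
end

section
/- Let L be a lattice and h : L → ℝ a polymatroid function. Define the ternary relation I x y z ↔ h (x ⊔ z) + h (y ⊔ z) = h (x ⊔ y ⊔ z) + h z. Then I is a semi-graphoid relation, i.e. it satisfies existence (I x y x for all x, y), symmetry (I x y w implies I y x w), decomposition (I x (y ⊔ z) w implies I x z w), contraction (I x z w and I x y (z ⊔ w) imply I x (y ⊔ z) w), and weak union (I x (y ⊔ z) w implies I x y (z ⊔ w)). -/
/-!
The relation `I x y z` says that the conditional mutual information
`h (x ⊔ z) + h (y ⊔ z) - h (x ⊔ y ⊔ z) - h z` vanishes. This quantity is nonnegative by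
monotonicity and submodularity, and satisfies the chain rule
`I(x; y ⊔ z | w) = I(x; z | w) + I(x; y | z ⊔ w)`. Decomposition and weak union follow because a
vanishing sum of two nonnegative terms has vanishing summands; contraction is the chain rule
read backwards.
-/

section CondMutualInfo

variable {L : Type*} [Lattice L]

def condMutualInfo (h : L → ℝ) (x y z : L) : ℝ :=
  h (x ⊔ z) + h (y ⊔ z) - h (x ⊔ y ⊔ z) - h z

lemma condMutualInfo_nonneg {h : L → ℝ} (hmono : Monotone h)
    (hsub : ∀ x y, h (x ⊔ y) + h (x ⊓ y) ≤ h x + h y) (x y z : L) :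
    0 ≤ condMutualInfo h x y z := by
  have hsup : (x ⊔ z) ⊔ (y ⊔ z) = x ⊔ y ⊔ z := by rw [sup_sup_sup_comm, sup_idem]
  have hinf : h z ≤ h ((x ⊔ z) ⊓ (y ⊔ z)) := hmono (le_inf le_sup_right le_sup_right)
  have hsubmod := hsub (x ⊔ z) (y ⊔ z)
  rw [hsup] at hsubmod
  unfold condMutualInfo
  linarith

lemma condMutualInfo_self (h : L → ℝ) (x y : L) : condMutualInfo h x y x = 0 := by
  rw [condMutualInfo, sup_idem, sup_right_comm, sup_idem, sup_comm]
  ring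

lemma condMutualInfo_comm (h : L → ℝ) (x y z : L) :
    condMutualInfo h x y z = condMutualInfo h y x z := by
  rw [condMutualInfo, condMutualInfo, sup_comm x y]
  ring

lemma condMutualInfo_sup_chain (h : L → ℝ) (x y z w : L) :
    condMutualInfo h x (y ⊔ z) w = condMutualInfo h x z w + condMutualInfo h x y (z ⊔ w) := by
  simp only [condMutualInfo, ← sup_assoc, sup_right_comm x y z]
  ring

end CondMutualInfo

theorem polymatroid_relation_semigraphoid_general {L : Type*} [Lattice L] (h : L → ℝ)
    (hmono : ∀ x y, x ≤ y → h x ≤ h y)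
    (hsub : ∀ x y, h (x ⊔ y) + h (x ⊓ y) ≤ h x + h y)
    (I : L → L → L → Prop)
    (hI : ∀ x y z, I x y z ↔ h (x ⊔ z) + h (y ⊔ z) = h (x ⊔ y ⊔ z) + h z) :
    (∀ x y, I x y x) ∧
    (∀ x y w, I x y w → I y x w) ∧
    (∀ x y z w, I x (y ⊔ z) w → I x z w) ∧
    (∀ x y z w, I x z w → I x y (z ⊔ w) → I x (y ⊔ z) w) ∧
    (∀ x y z w, I x (y ⊔ z) w → I x y (z ⊔ w)) := by
  have hI' : ∀ x y z, I x y z ↔ condMutualInfo h x y z = 0 := fun x y z => by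
    rw [hI, condMutualInfo, sub_sub, sub_eq_zero]
  have hnonneg := condMutualInfo_nonneg (fun x y => hmono x y) hsub
  have hchain := condMutualInfo_sup_chain h
  simp only [hI']
  refine ⟨condMutualInfo_self h, fun x y w => (condMutualInfo_comm h y x w).trans, ?_, ?_, ?_⟩
  · intro x y z w hxyz
    linarith [hchain x y z w, hnonneg x z w, hnonneg x y (z ⊔ w)]
  · intro x y z w hxz hxy
    linarith [hchain x y z w]
  · intro x y z w hxyz
    linarith [hchain x y z w, hnonneg x z w, hnonneg x y (z ⊔ w)]

/-- The independence relation induced by a polymatroid function on a lattice is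
semi-graphoid: it satisfies existence, symmetry, decomposition, contraction and
weak union. -/
theorem polymatroid_relation_semigraphoid {L : Type*} [Lattice L] (h : L → ℝ)
    (h0 : ∀ x, 0 ≤ h x)
    (hmono : ∀ x y, x ≤ y → h x ≤ h y)
    (hsub : ∀ x y, h (x ⊔ y) + h (x ⊓ y) ≤ h x + h y)
    (I : L → L → L → Prop)
    (hI : ∀ x y z, I x y z ↔ h (x ⊔ z) + h (y ⊔ z) = h (x ⊔ y ⊔ z) + h z) :
    (∀ x y, I x y x) ∧
    (∀ x y w, I x y w → I y x w) ∧
    (∀ x y z w, I x (y ⊔ z) w → I x z w) ∧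
    (∀ x y z w, I x z w → I x y (z ⊔ w) → I x (y ⊔ z) w) ∧
    (∀ x y z w, I x (y ⊔ z) w → I x y (z ⊔ w)) :=
  polymatroid_relation_semigraphoid_general h hmono hsub I hI
end

section
/- Let L be a lattice with a semi-graphoid relation I, and define the binary relation r by r a b ↔ I b b a. Then r satisfies Armstrong's axioms: (reflexivity) b ≤ a implies r a b; (transitivity) r a b and r b c imply r a c; (augmentation) r a b implies r (a ⊔ z) (b ⊔ z) for every z. Moreover r satisfies decomposition (r z (x ⊔ y) implies r z x) and union (r z x and r z y imply r z (x ⊔ y)). -/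
/-!
The key observation is that `I a a w` is the strongest statement about `a` given `w`: it yields
`I a s w` for every `s` (contraction with existence, then decomposition), and it survives enlarging
the conditioning set (weak union).
-/

structure IsSemigraphoid {L : Type*} [Lattice L] (I : L → L → L → Prop) : Prop where
  existence : ∀ x y, I x y x
  symm : ∀ x y w, I x y w → I y x w
  decomposition : ∀ x y z w, I x (y ⊔ z) w → I x z w
  contraction : ∀ x y z w, I x z w → I x y (z ⊔ w) → I x (y ⊔ z) w
  weak_union : ∀ x y z w, I x (y ⊔ z) w → I x y (z ⊔ w)

namespace IsSemigraphoid

variable {L : Type*} [Lattice L] {I : L → L → L → Prop} (hI : IsSemigraphoid I)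
include hI

theorem decomposition_left {x y z w : L} (h : I x (y ⊔ z) w) : I x y w :=
  hI.decomposition x z y w (sup_comm y z ▸ h)

theorem cond_sup_self (x y w : L) : I x y (w ⊔ x) :=
  hI.weak_union x y w x (hI.existence x (y ⊔ w))

theorem sup_of_self {a w : L} (s : L) (h : I a a w) : I a (a ⊔ s) w := by
  have hs : I a s (a ⊔ w) := sup_comm w a ▸ hI.cond_sup_self a s w
  exact sup_comm s a ▸ hI.contraction a s a w h hs

theorem of_self {a w : L} (s : L) (h : I a a w) : I a s w :=
  hI.decomposition_left (sup_comm a s ▸ hI.sup_of_self s h)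

theorem self_cond_sup {a w : L} (s : L) (h : I a a w) : I a a (s ⊔ w) :=
  hI.weak_union a a s w (hI.sup_of_self s h)

theorem self_of_le {a b : L} (h : b ≤ a) : I b b a :=
  sup_eq_left.mpr h ▸ hI.self_cond_sup a (hI.existence b b)

theorem self_trans {a b c : L} (hab : I b b a) (hbc : I c c b) : I c c a := by
  have hcb : I c b a := hI.symm b c a (hI.of_self c hab)
  have hc : I c c (b ⊔ a) := sup_comm a b ▸ hI.self_cond_sup a hbc
  exact hI.decomposition_left (hI.contraction c c b a hcb hc)

theorem self_of_sup_self {x y z : L} (h : I (x ⊔ y) (x ⊔ y) z) : I x x z :=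
  hI.decomposition_left (hI.symm _ _ _ (hI.decomposition_left h))

theorem sup_self_of_self {x y z : L} (hx : I x x z) (hy : I y y z) :
    I (x ⊔ y) (x ⊔ y) z := by
  have hxy : I (x ⊔ y) x z := hI.symm _ _ _ (hI.of_self (x ⊔ y) hx)
  have hyx : I (x ⊔ y) y (x ⊔ z) :=
    hI.symm _ _ _ (hI.of_self (x ⊔ y) (hI.self_cond_sup x hy))
  exact sup_comm y x ▸ hI.contraction (x ⊔ y) y x z hxy hyx

theorem sup_self_sup {a b : L} (z : L) (h : I b b a) : I (b ⊔ z) (b ⊔ z) (a ⊔ z) :=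
  hI.sup_self_of_self (sup_comm z a ▸ hI.self_cond_sup z h) (hI.self_of_le le_sup_right)

end IsSemigraphoid

/-- For a semi-graphoid relation `I` on a lattice, the relation `r a b ↔ I b b a`
satisfies Armstrong's axioms (reflexivity, transitivity, augmentation) as well as
decomposition and union. -/
theorem semigraphoid_functional_dependence_armstrong {L : Type*} [Lattice L]
    (I : L → L → L → Prop)
    (hex : ∀ x y, I x y x)
    (hsym : ∀ x y w, I x y w → I y x w)
    (hdec : ∀ x y z w, I x (y ⊔ z) w → I x z w)
    (hcon : ∀ x y z w, I x z w → I x y (z ⊔ w) → I x (y ⊔ z) w)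
    (hwu : ∀ x y z w, I x (y ⊔ z) w → I x y (z ⊔ w))
    (r : L → L → Prop) (hr : ∀ a b, r a b ↔ I b b a) :
    (∀ a b, b ≤ a → r a b) ∧
    (∀ a b c, r a b → r b c → r a c) ∧
    (∀ a b z, r a b → r (a ⊔ z) (b ⊔ z)) ∧
    (∀ x y z, r z (x ⊔ y) → r z x) ∧
    (∀ x y z, r z x → r z y → r z (x ⊔ y)) := by
  have hI : IsSemigraphoid I := ⟨hex, hsym, hdec, hcon, hwu⟩
  simp only [hr]
  exact ⟨fun _ _ => hI.self_of_le, fun _ _ _ hab hbc => hI.self_trans hab hbc,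
    fun _ _ z => hI.sup_self_sup z, fun _ _ _ => hI.self_of_sup_self,
    fun _ _ _ => hI.sup_self_of_self⟩
end

section
/- Let L be a lattice with a semi-graphoid relation I. Then I satisfies base monotonicity: if I a b d and d ≤ c ≤ b, then I a b c. -/
theorem semigraphoid_base_monotonicity_general {L : Type*} [Lattice L]
    (I : L → L → L → Prop)
    (hwu : ∀ x y z w, I x (y ⊔ z) w → I x y (z ⊔ w)) :
    ∀ a b c d, I a b d → d ≤ c → c ≤ b → I a b c := by
  intro a b c d h hdc hcb
  rw [← sup_eq_left.mpr hcb] at h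
  simpa only [sup_eq_left.mpr hdc] using hwu a b c d h

/-- A semi-graphoid relation on a lattice satisfies base monotonicity:
if `I a b d` and `d ≤ c ≤ b`, then `I a b c`. -/
theorem semigraphoid_base_monotonicity {L : Type*} [Lattice L]
    (I : L → L → L → Prop)
    (hex : ∀ x y, I x y x)
    (hsym : ∀ x y w, I x y w → I y x w)
    (hdec : ∀ x y z w, I x (y ⊔ z) w → I x z w)
    (hcon : ∀ x y z w, I x z w → I x y (z ⊔ w) → I x (y ⊔ z) w)
    (hwu : ∀ x y z w, I x (y ⊔ z) w → I x y (z ⊔ w)) :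
    ∀ a b c d, I a b d → d ≤ c → c ≤ b → I a b c :=
  semigraphoid_base_monotonicity_general I hwu
end

section
/- Let L be a finite lattice and h : L → ℝ a submodular function (h (a ⊔ b) + h (a ⊓ b) ≤ h a + h b for all a, b). Suppose h is increasing at every meet-irreducible element, i.e. for every meet-irreducible c ∈ L and every a with c ≤ a one has h c ≤ h a. Then h is monotone on all of L: x ≤ y implies h x ≤ h y. -/
/-!
Induct downwards on `x`, proving `h x ≤ h y` for all `y ≥ x`; it suffices to treat a cover
`x ⋖ y`. If `x` is meet-irreducible this is the hypothesis. Otherwise `x = u ⊓ v` with `u, v > x`,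
and one of them, say `u`, is not above `y`, so `u ⊓ y = x`. Submodularity gives
`h (u ⊔ y) + h x ≤ h u + h y`, and the induction hypothesis at `u > x` gives `h u ≤ h (u ⊔ y)`.
-/

theorem CovBy.inf_eq_of_not_le {α : Type*} [Lattice α] {x y u : α} (hxy : x ⋖ y) (hxu : x ≤ u)
    (hyu : ¬y ≤ u) : u ⊓ y = x :=
  ((hxy.eq_or_eq (le_inf hxu hxy.le) inf_le_right).resolve_right fun h => hyu (h ▸ inf_le_left))

theorem CovBy.exists_lt_inf_eq_of_not_infIrred {α : Type*} [Lattice α] {x y : α} (hxy : x ⋖ y)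
    (hx : ¬InfIrred x) : ∃ u, x < u ∧ u ⊓ y = x := by
  obtain hmax | ⟨u, v, rfl, hu, hv⟩ := not_infIrred.1 hx
  · exact absurd hxy.lt hmax.not_lt
  by_cases hyu : y ≤ u
  · exact ⟨v, hv, hxy.inf_eq_of_not_le hv.le fun hyv => hxy.lt.not_ge (le_inf hyu hyv)⟩
  · exact ⟨u, hu, hxy.inf_eq_of_not_le hu.le hyu⟩

theorem monotone_of_covBy {α β : Type*} [PartialOrder α] [WellFoundedLT α] [WellFoundedGT α]
    [Preorder β] {f : α → β}
    (step : ∀ x y, x ⋖ y → (∀ u, x < u → ∀ v, u ≤ v → f u ≤ f v) → f x ≤ f y) :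
    Monotone f := by
  intro x
  induction x using WellFoundedGT.induction with
  | _ x ih =>
    intro y hxy
    obtain rfl | hlt := hxy.eq_or_lt
    · exact le_rfl
    obtain ⟨z, hxz, hzy⟩ := exists_covBy_le_of_lt hlt
    exact (step x z hxz ih).trans (ih z hxz.lt hzy)

/-- If a submodular function on a finite lattice is increasing at every
meet-irreducible element, then it is monotone on the whole lattice. -/
theorem submodular_increasing_on_meet_irreducible {L : Type*} [Lattice L]
    [Finite L] [OrderTop L] (h : L → ℝ)
    (hsub : ∀ a b, h (a ⊔ b) + h (a ⊓ b) ≤ h a + h b)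
    (hirr : ∀ c : L, c ≠ ⊤ → (∀ x y, c = x ⊓ y → c = x ∨ c = y) →
      ∀ a, c ≤ a → h c ≤ h a) :
    ∀ x y, x ≤ y → h x ≤ h y := by
  refine monotone_of_covBy fun x y hxy ih => ?_
  by_cases hx : InfIrred x
  · refine hirr x (fun hx' => hx.1 (hx' ▸ isMax_top)) (fun u v huv => ?_) y hxy.le
    exact (hx.2 huv.symm).imp Eq.symm Eq.symm
  obtain ⟨u, hxu, hux⟩ := hxy.exists_lt_inf_eq_of_not_infIrred hx
  have hsub_uy := hsub u y
  rw [hux] at hsub_uy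
  linarith [ih u hxu (u ⊔ y) le_sup_left]
end

section
/- Let L be a finite modular lattice and h : L → ℝ a function such that the submodular inequality h (a ⊔ b) + h (a ⊓ b) ≤ h a + h b holds for every pair a, b for which a ⊓ b is covered by both a and b. Then h is submodular on all of L: h (a ⊔ b) + h (a ⊓ b) ≤ h a + h b for all a, b ∈ L. -/
/-!
Induct on the size of the interval `[a ⊓ b, a ⊔ b]`. If `a ⊓ b` is not covered by `b`, pick
`a ⊓ b < c < b`; the submodular inequalities for `(a, c)` and `(a ⊔ c, b)` add up to the one
for `(a, b)`, because `a ⊓ c = a ⊓ b` and, by modularity, `(a ⊔ c) ⊓ b = c`. Both new pairs span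
strictly smaller intervals, so only pairs covering their meet on both sides remain.
-/

section

variable {L : Type*} [Lattice L]

def SubmodularPair (h : L → ℝ) (a b : L) : Prop :=
  h (a ⊔ b) + h (a ⊓ b) ≤ h a + h b

section Interval

open Set

variable {a b c : L}

theorem inf_eq_inf_of_inf_le_of_le (hc : a ⊓ b ≤ c) (hcb : c ≤ b) : a ⊓ c = a ⊓ b :=
  le_antisymm (inf_le_inf_left a hcb) (le_inf inf_le_left hc)

theorem sup_sup_eq_sup_of_le (hcb : c ≤ b) : a ⊔ c ⊔ b = a ⊔ b := by
  rw [sup_assoc, sup_eq_right.2 hcb]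

theorem sup_inf_eq_of_inf_le_of_le [IsModularLattice L] (hc : a ⊓ b ≤ c) (hcb : c ≤ b) :
    (a ⊔ c) ⊓ b = c := by
  rw [sup_comm, sup_inf_assoc_of_le _ hcb, sup_eq_left.2 hc]

theorem Icc_inf_sup_ssubset_of_lt [IsModularLattice L] (hc : a ⊓ b ≤ c) (hcb : c < b) :
    Icc (a ⊓ c) (a ⊔ c) ⊂ Icc (a ⊓ b) (a ⊔ b) := by
  have hsup : a ⊔ c < a ⊔ b := by
    refine (sup_le_sup_left hcb.le a).lt_of_ne fun heq => hcb.ne ?_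
    refine eq_of_le_of_inf_le_of_sup_le (z := a) hcb.le ?_ ?_
    · rw [inf_comm b, inf_comm c, inf_eq_inf_of_inf_le_of_le hc hcb.le]
    · rw [sup_comm b, sup_comm c, heq]
  rw [inf_eq_inf_of_inf_le_of_le hc hcb.le]
  exact Icc_ssubset_Icc_right (inf_le_left.trans le_sup_left) le_rfl hsup

theorem Icc_inf_sup_ssubset_of_inf_lt [IsModularLattice L] (hc : a ⊓ b < c) (hcb : c ≤ b) :
    Icc ((a ⊔ c) ⊓ b) (a ⊔ c ⊔ b) ⊂ Icc (a ⊓ b) (a ⊔ b) := by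
  rw [sup_inf_eq_of_inf_le_of_le hc.le hcb, sup_sup_eq_sup_of_le hcb]
  exact Icc_ssubset_Icc_left (inf_le_left.trans le_sup_left) hc le_rfl

end Interval

namespace SubmodularPair

open Set

variable {h : L → ℝ} {a b c : L}

theorem symm (hab : SubmodularPair h a b) : SubmodularPair h b a := by
  rwa [SubmodularPair, sup_comm, inf_comm, add_comm (h b)]

theorem of_le (hab : a ≤ b) : SubmodularPair h a b := by
  rw [SubmodularPair, sup_eq_right.2 hab, inf_eq_left.2 hab, add_comm]

theorem split [IsModularLattice L] (hc : a ⊓ b ≤ c) (hcb : c ≤ b) (hac : SubmodularPair h a c)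
    (hacb : SubmodularPair h (a ⊔ c) b) : SubmodularPair h a b := by
  rw [SubmodularPair, inf_eq_inf_of_inf_le_of_le hc hcb] at hac
  rw [SubmodularPair, sup_inf_eq_of_inf_le_of_le hc hcb, sup_sup_eq_sup_of_le hcb] at hacb
  unfold SubmodularPair
  linarith

theorem of_not_covBy [IsModularLattice L] [Finite L] (hb : ¬a ⊓ b ⋖ b)
    (ih : ∀ x y : L, (Icc (x ⊓ y) (x ⊔ y)).ncard < (Icc (a ⊓ b) (a ⊔ b)).ncard →
      SubmodularPair h x y) :
    SubmodularPair h a b := by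
  rcases (inf_le_right : a ⊓ b ≤ b).lt_or_eq with hlt | heq
  · obtain ⟨c, hc, hcb⟩ := exists_lt_lt_of_not_covBy hlt hb
    exact (ih a c (ncard_lt_ncard (Icc_inf_sup_ssubset_of_lt hc.le hcb) (toFinite _))).split
      hc.le hcb.le (ih _ _ (ncard_lt_ncard (Icc_inf_sup_ssubset_of_inf_lt hc hcb.le) (toFinite _)))
  · exact (of_le (inf_eq_right.1 heq)).symm

end SubmodularPair

end

/-- In a finite modular lattice, a function satisfying the submodular inequality on
every pair `a, b` for which `a ⊓ b` is covered by both `a` and `b` is submodular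
on the whole lattice. -/
theorem submodular_of_covering_pairs {L : Type*} [Lattice L] [Finite L]
    [IsModularLattice L] (h : L → ℝ)
    (hcov : ∀ a b : L, a ⊓ b ⋖ a → a ⊓ b ⋖ b → h (a ⊔ b) + h (a ⊓ b) ≤ h a + h b) :
    ∀ a b : L, h (a ⊔ b) + h (a ⊓ b) ≤ h a + h b := by
  intro a b
  induction hn : (Set.Icc (a ⊓ b) (a ⊔ b)).ncard using Nat.strong_induction_on
    generalizing a b with
  | _ n ih =>
  have ih' : ∀ x y : L, (Set.Icc (x ⊓ y) (x ⊔ y)).ncard < n → SubmodularPair h x y :=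
    fun x y hxy => ih _ hxy x y rfl
  by_cases hb : a ⊓ b ⋖ b
  · by_cases ha : a ⊓ b ⋖ a
    · exact hcov a b ha hb
    · refine SubmodularPair.symm (.of_not_covBy (by rwa [inf_comm]) ?_)
      rwa [inf_comm, sup_comm, hn]
  · exact SubmodularPair.of_not_covBy hb (hn ▸ ih')
end

section
/- Let L be a finite lattice and M ⊆ L a subset containing the top element and closed under meets (m, m' ∈ M imply m ⊓ m' ∈ M). For ℓ ∈ L let τ ℓ denote the least element of {m ∈ M | ℓ ≤ m} (which exists). Let h : L → ℝ satisfy, for all m, m' ∈ M: 0 ≤ h m; m ≤ m' implies h m ≤ h m'; and h (τ (m ⊔ m')) + h (m ⊓ m') ≤ h m + h m'. Then the function h̃ := h ∘ τ agrees with h on M, and h̃ is nonnegative, monotone, and submodular on L: h̃ (x ⊔ y) + h̃ (x ⊓ y) ≤ h̃ x + h̃ y for all x, y ∈ L. -/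
/-!
`τ` is a closure operator whose closed elements are exactly `M`. Monotonicity of `h ∘ τ` is
then inherited from that of `h` on `M`. For submodularity, compare `x, y` with their closures:
`τ (x ⊔ y) ≤ τ (τ x ⊔ τ y)`, and since `τ x ⊓ τ y ∈ M` lies above `x ⊓ y`, also
`τ (x ⊓ y) ≤ τ x ⊓ τ y`; the submodularity of `h` on `M` applied to `τ x, τ y` finishes.
-/

def IsLeastAboveIn {L : Type*} [LE L] (M : Set L) (τ : L → L) : Prop :=
  ∀ ℓ : L, IsLeast {m | m ∈ M ∧ ℓ ≤ m} (τ ℓ)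

namespace IsLeastAboveIn

section Preorder

variable {L : Type*} [Preorder L] {M : Set L} {τ : L → L} (hτ : IsLeastAboveIn M τ)
include hτ

theorem mem (ℓ : L) : τ ℓ ∈ M := (hτ ℓ).1.1

theorem le_self (ℓ : L) : ℓ ≤ τ ℓ := (hτ ℓ).1.2

theorem le_of_mem {ℓ m : L} (hm : m ∈ M) (hℓm : ℓ ≤ m) : τ ℓ ≤ m := (hτ ℓ).2 ⟨hm, hℓm⟩

theorem monotone : Monotone τ := fun _ y hxy =>
  hτ.le_of_mem (hτ.mem y) (hxy.trans (hτ.le_self y))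

end Preorder

theorem eq_self_of_mem {L : Type*} [PartialOrder L] {M : Set L} {τ : L → L}
    (hτ : IsLeastAboveIn M τ) {m : L} (hm : m ∈ M) : τ m = m :=
  le_antisymm (hτ.le_of_mem hm le_rfl) (hτ.le_self m)

theorem submodular_comp {L : Type*} [Lattice L] {M : Set L} {τ : L → L}
    (hτ : IsLeastAboveIn M τ) (hmeet : ∀ m ∈ M, ∀ m' ∈ M, m ⊓ m' ∈ M) {h : L → ℝ}
    (hmono : ∀ m ∈ M, ∀ m' ∈ M, m ≤ m' → h m ≤ h m')
    (hsub : ∀ m ∈ M, ∀ m' ∈ M, h (τ (m ⊔ m')) + h (m ⊓ m') ≤ h m + h m') (x y : L) :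
    h (τ (x ⊔ y)) + h (τ (x ⊓ y)) ≤ h (τ x) + h (τ y) := by
  have hinf_mem : τ x ⊓ τ y ∈ M := hmeet _ (hτ.mem x) _ (hτ.mem y)
  have hsup : h (τ (x ⊔ y)) ≤ h (τ (τ x ⊔ τ y)) :=
    hmono _ (hτ.mem _) _ (hτ.mem _)
      (hτ.monotone (sup_le_sup (hτ.le_self x) (hτ.le_self y)))
  have hinf : h (τ (x ⊓ y)) ≤ h (τ x ⊓ τ y) :=
    hmono _ (hτ.mem _) _ hinf_mem
      (hτ.le_of_mem hinf_mem (inf_le_inf (hτ.le_self x) (hτ.le_self y)))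
  linarith [hsub _ (hτ.mem x) _ (hτ.mem y)]

end IsLeastAboveIn

theorem polymatroid_extension_from_meet_semilattice_general {L : Type*} [Lattice L]
    (M : Set L) (hmeet : ∀ m ∈ M, ∀ m' ∈ M, m ⊓ m' ∈ M)
    (τ : L → L) (hτ : ∀ ℓ : L, IsLeast {m | m ∈ M ∧ ℓ ≤ m} (τ ℓ))
    (h : L → ℝ)
    (h0 : ∀ m ∈ M, 0 ≤ h m)
    (hmono : ∀ m ∈ M, ∀ m' ∈ M, m ≤ m' → h m ≤ h m')
    (hsub : ∀ m ∈ M, ∀ m' ∈ M, h (τ (m ⊔ m')) + h (m ⊓ m') ≤ h m + h m') :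
    (∀ m ∈ M, h (τ m) = h m) ∧
    (∀ x, 0 ≤ h (τ x)) ∧
    (∀ x y, x ≤ y → h (τ x) ≤ h (τ y)) ∧
    (∀ x y, h (τ (x ⊔ y)) + h (τ (x ⊓ y)) ≤ h (τ x) + h (τ y)) := by
  have hτ' : IsLeastAboveIn M τ := hτ
  exact ⟨fun _ hm => by rw [hτ'.eq_self_of_mem hm],
    fun x => h0 _ (hτ'.mem x),
    fun x y hxy => hmono _ (hτ'.mem x) _ (hτ'.mem y) (hτ'.monotone hxy),
    hτ'.submodular_comp hmeet hmono hsub⟩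

/-- Extension of a polymatroid function from a meet-closed subset `M` of a finite
lattice: if `τ ℓ` is the least element of `M` above `ℓ`, and `h` is nonnegative,
monotone and submodular on `M` (with joins computed via `τ`), then `h ∘ τ` agrees
with `h` on `M` and is nonnegative, monotone and submodular on all of `L`. -/
theorem polymatroid_extension_from_meet_semilattice {L : Type*} [Lattice L]
    [Finite L] [OrderTop L]
    (M : Set L) (htop : ⊤ ∈ M) (hmeet : ∀ m ∈ M, ∀ m' ∈ M, m ⊓ m' ∈ M)
    (τ : L → L) (hτ : ∀ ℓ : L, IsLeast {m | m ∈ M ∧ ℓ ≤ m} (τ ℓ))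
    (h : L → ℝ)
    (h0 : ∀ m ∈ M, 0 ≤ h m)
    (hmono : ∀ m ∈ M, ∀ m' ∈ M, m ≤ m' → h m ≤ h m')
    (hsub : ∀ m ∈ M, ∀ m' ∈ M, h (τ (m ⊔ m')) + h (m ⊓ m') ≤ h m + h m') :
    (∀ m ∈ M, h (τ m) = h m) ∧
    (∀ x, 0 ≤ h (τ x)) ∧
    (∀ x y, x ≤ y → h (τ x) ≤ h (τ y)) ∧
    (∀ x y, h (τ (x ⊔ y)) + h (τ (x ⊓ y)) ≤ h (τ x) + h (τ y)) :=
  polymatroid_extension_from_meet_semilattice_general M hmeet τ hτ h h0 hmono hsub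
end

section
/- Let L be a lattice and h : L → ℝ a polymatroid function. Then the relation r defined by r x y ↔ h (x ⊔ y) = h x satisfies Armstrong's axioms: (reflexivity) y ≤ x implies r x y; (transitivity) r x y and r y z imply r x z; (augmentation) r x y implies r (x ⊔ z) (y ⊔ z) for every z. -/
/-!
Submodularity says that the gain `h (z ⊔ y) - h z` of adding `y` can only shrink as `z` grows.
So if adding `y` to `x` gains nothing, adding it to any `z ≥ x` gains nothing either; both
transitivity and augmentation are instances of this, and reflexivity is `x ⊔ y = x`.
-/

section Polymatroid

variable {L M : Type*} [Lattice L] [AddCommMonoid M] [PartialOrder M]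
  [IsOrderedCancelAddMonoid M] {h : L → M}

theorem map_sup_eq_of_map_sup_eq_of_le (hmono : Monotone h)
    (hsub : ∀ x y, h (x ⊔ y) + h (x ⊓ y) ≤ h x + h y) {x y z : L}
    (hxy : h (x ⊔ y) = h x) (hxz : x ≤ z) : h (z ⊔ y) = h z := by
  refine le_antisymm (le_of_add_le_add_right (a := h x) ?_) (hmono le_sup_left)
  calc h (z ⊔ y) + h x
      ≤ h (z ⊔ (x ⊔ y)) + h (z ⊓ (x ⊔ y)) := by
        rw [← sup_assoc, sup_eq_left.mpr hxz]
        exact add_le_add_right (hmono (le_inf hxz le_sup_left)) _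
    _ ≤ h z + h x := hxy ▸ hsub z (x ⊔ y)

theorem map_sup_eq_trans (hmono : Monotone h)
    (hsub : ∀ x y, h (x ⊔ y) + h (x ⊓ y) ≤ h x + h y) {x y z : L}
    (hxy : h (x ⊔ y) = h x) (hyz : h (y ⊔ z) = h y) : h (x ⊔ z) = h x := by
  have hxyz : h (x ⊔ y ⊔ z) = h x :=
    (map_sup_eq_of_map_sup_eq_of_le hmono hsub hyz le_sup_right).trans hxy
  refine le_antisymm ?_ (hmono le_sup_left)
  calc h (x ⊔ z) ≤ h (x ⊔ y ⊔ z) := hmono (sup_le_sup_right le_sup_left z)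
    _ = h x := hxyz

theorem map_sup_sup_eq_of_map_sup_eq (hmono : Monotone h)
    (hsub : ∀ x y, h (x ⊔ y) + h (x ⊓ y) ≤ h x + h y) {x y : L}
    (hxy : h (x ⊔ y) = h x) (z : L) : h (x ⊔ z ⊔ (y ⊔ z)) = h (x ⊔ z) := by
  rw [← sup_sup_distrib_right, sup_right_comm]
  exact map_sup_eq_of_map_sup_eq_of_le hmono hsub hxy le_sup_left

end Polymatroid

theorem polymatroid_dependence_armstrong_general {L : Type*} [Lattice L] (h : L → ℝ)
    (hmono : ∀ x y, x ≤ y → h x ≤ h y)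
    (hsub : ∀ x y, h (x ⊔ y) + h (x ⊓ y) ≤ h x + h y)
    (r : L → L → Prop) (hr : ∀ x y, r x y ↔ h (x ⊔ y) = h x) :
    (∀ x y, y ≤ x → r x y) ∧
    (∀ x y z, r x y → r y z → r x z) ∧
    (∀ x y z, r x y → r (x ⊔ z) (y ⊔ z)) := by
  have hmono' : Monotone h := fun x y => hmono x y
  simp only [hr]
  exact ⟨fun x y hyx => by rw [sup_eq_left.mpr hyx],
    fun x y z => map_sup_eq_trans hmono' hsub,
    fun x y z hxy => map_sup_sup_eq_of_map_sup_eq hmono' hsub hxy z⟩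

/-- For a polymatroid function `h` on a lattice, the relation
`r x y ↔ h (x ⊔ y) = h x` satisfies Armstrong's axioms:
reflexivity, transitivity and augmentation. -/
theorem polymatroid_dependence_armstrong {L : Type*} [Lattice L] (h : L → ℝ)
    (h0 : ∀ x, 0 ≤ h x)
    (hmono : ∀ x y, x ≤ y → h x ≤ h y)
    (hsub : ∀ x y, h (x ⊔ y) + h (x ⊓ y) ≤ h x + h y)
    (r : L → L → Prop) (hr : ∀ x y, r x y ↔ h (x ⊔ y) = h x) :
    (∀ x y, y ≤ x → r x y) ∧
    (∀ x y z, r x y → r y z → r x z) ∧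
    (∀ x y z, r x y → r (x ⊔ z) (y ⊔ z)) :=
  polymatroid_dependence_armstrong_general h hmono hsub r hr
end

section
/- Let L be a finite distributive lattice of order dimension at most 2, i.e. assume there exist linear orders α and β and an injective map from L into α × β preserving the lattice operations ⊓ and ⊔. Let h be an extreme point of the convex set of normalized polymatroid functions on L, namely the set of g : L → ℝ that are nonnegative, monotone, submodular, and satisfy g ⊤ = 1. Then h takes only the values 0 and 1: for every x ∈ L, h x = 0 or h x = 1. -/
/-! Ranking the two coordinate chains embeds `L` into `ℕ × ℕ` as a sublattice via some `g`.
For a polymatroid `h`, the grid function `h ∘ g.ceil` is again submodular, so its mixed second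
differences are nonnegative, and their sum over the quadrant above `g x` telescopes to
`h ⊤ - h x`. Hence `h` is a nonnegative combination of the constant `1` and the indicators of the
complements of the ideals `{x | g x ≤ p}`, all `0`-`1` valued polymatroids. Each polymatroid
summand of an extreme normalized polymatroid is a multiple of it, so an extreme point equals one
of these generators. -/

open Finset Function

section Polymatroid

variable {L : Type*} [Lattice L]

structure IsPolymatroid (g : L → ℝ) : Prop where
  nonneg : ∀ x, 0 ≤ g x
  mono : Monotone g
  submodular : ∀ x y, g (x ⊔ y) + g (x ⊓ y) ≤ g x + g y

theorem IsPolymatroid.add {g g' : L → ℝ} (hg : IsPolymatroid g) (hg' : IsPolymatroid g') :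
    IsPolymatroid (g + g') where
  nonneg x := add_nonneg (hg.nonneg x) (hg'.nonneg x)
  mono := hg.mono.add hg'.mono
  submodular x y := by
    simp only [Pi.add_apply]
    linarith [hg.submodular x y, hg'.submodular x y]

theorem IsPolymatroid.smul {g : L → ℝ} (hg : IsPolymatroid g) {c : ℝ} (hc : 0 ≤ c) :
    IsPolymatroid (c • g) where
  nonneg x := mul_nonneg hc (hg.nonneg x)
  mono := hg.mono.const_smul hc
  submodular x y := by
    simp only [Pi.smul_apply, smul_eq_mul, ← mul_add]
    exact mul_le_mul_of_nonneg_left (hg.submodular x y) hc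

variable (L) in
def polymatroidCone : PointedCone ℝ (L → ℝ) where
  carrier := {g | IsPolymatroid g}
  add_mem' := IsPolymatroid.add
  zero_mem' := ⟨fun _ => le_rfl, monotone_const, fun _ _ => by simp⟩
  smul_mem' c _ hg := hg.smul c.2

variable (L) in
def zeroOnePolymatroids : Set (L → ℝ) := {u | IsPolymatroid u ∧ ∀ x, u x = 0 ∨ u x = 1}

theorem indicator_compl_mem_zeroOnePolymatroids {D : Set L} (hlower : IsLowerSet D)
    (hsup : SupClosed D) : Dᶜ.indicator 1 ∈ zeroOnePolymatroids L := by
  set u : L → ℝ := Dᶜ.indicator 1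
  have hu01 x : u x = 0 ∨ u x = 1 := Set.indicator_eq_zero_or_self _ _ _
  have hin {x} (hx : x ∈ D) : u x = 0 := Set.indicator_of_notMem (by simpa) _
  have hout {x} (hx : x ∉ D) : u x = 1 := Set.indicator_of_mem hx _
  have hnonneg x : 0 ≤ u x := by rcases hu01 x with h | h <;> norm_num [h]
  have hle x : u x ≤ 1 := by rcases hu01 x with h | h <;> norm_num [h]
  refine ⟨⟨hnonneg, fun x y hxy => ?_, fun x y => ?_⟩, hu01⟩
  · by_cases hy : y ∈ D
    · rw [hin hy, hin (hlower hxy hy)]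
    · rw [hout hy]; exact hle x
  · have hinf : x ∈ D ∨ y ∈ D → x ⊓ y ∈ D := by
      rintro (hx | hy)
      exacts [hlower inf_le_left hx, hlower inf_le_right hy]
    by_cases hx : x ∈ D <;> by_cases hy : y ∈ D
    · rw [hin hx, hin hy, hin (hsup hx hy), hin (hinf (.inl hx))]
    · rw [hin hx, hout hy, hin (hinf (.inl hx))]; linarith [hle (x ⊔ y)]
    · rw [hout hx, hin hy, hin (hinf (.inr hy))]; linarith [hle (x ⊔ y)]
    · rw [hout hx, hout hy]; linarith [hle (x ⊔ y), hle (x ⊓ y)]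

variable [OrderTop L]

theorem IsPolymatroid.eq_zero_of_apply_top_eq_zero {g : L → ℝ} (hg : IsPolymatroid g)
    (htop : g ⊤ = 0) : g = 0 :=
  funext fun x => le_antisymm (htop ▸ hg.mono le_top : g x ≤ 0) (hg.nonneg x)

variable (L) in
def normalizedPolymatroids : Set (L → ℝ) := {g | IsPolymatroid g ∧ g ⊤ = 1}

theorem normalizedPolymatroids_eq : normalizedPolymatroids L =
    {g : L → ℝ | (∀ x, 0 ≤ g x) ∧ (∀ x y, x ≤ y → g x ≤ g y) ∧
      (∀ x y, g (x ⊔ y) + g (x ⊓ y) ≤ g x + g y) ∧ g ⊤ = 1} :=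
  Set.ext fun _ =>
    ⟨fun ⟨⟨h0, hmono, hsub⟩, htop⟩ => ⟨h0, fun _ _ hxy => hmono hxy, hsub, htop⟩,
      fun ⟨h0, hmono, hsub, htop⟩ => ⟨⟨h0, fun x y hxy => hmono x y hxy, hsub⟩, htop⟩⟩

theorem IsPolymatroid.inv_smul_mem_normalizedPolymatroids {g : L → ℝ} (hg : IsPolymatroid g)
    (htop : 0 < g ⊤) : (g ⊤)⁻¹ • g ∈ normalizedPolymatroids L :=
  ⟨hg.smul (inv_nonneg.2 htop.le), inv_mul_cancel₀ htop.ne'⟩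

theorem eq_smul_of_add_eq_of_mem_extremePoints {h a b : L → ℝ}
    (hh : h ∈ (normalizedPolymatroids L).extremePoints ℝ) (ha : IsPolymatroid a)
    (hb : IsPolymatroid b) (hab : a + b = h) : a = a ⊤ • h := by
  have htop : a ⊤ + b ⊤ = 1 := by rw [← Pi.add_apply, hab, hh.1.2]
  rcases (ha.nonneg ⊤).eq_or_lt with ha0 | ha0
  · rw [← ha0, zero_smul, ha.eq_zero_of_apply_top_eq_zero ha0.symm]
  rcases (hb.nonneg ⊤).eq_or_lt with hb0 | hb0
  · rw [hb.eq_zero_of_apply_top_eq_zero hb0.symm, add_zero] at hab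
    rw [hab, hh.1.2, one_smul]
  have hseg : h ∈ openSegment ℝ ((a ⊤)⁻¹ • a) ((b ⊤)⁻¹ • b) :=
    ⟨a ⊤, b ⊤, ha0, hb0, htop, by rw [smul_inv_smul₀ ha0.ne', smul_inv_smul₀ hb0.ne', hab]⟩
  have ha_eq : (a ⊤)⁻¹ • a = h := hh.2 (ha.inv_smul_mem_normalizedPolymatroids ha0)
    (hb.inv_smul_mem_normalizedPolymatroids hb0) hseg
  rw [← ha_eq, smul_inv_smul₀ ha0.ne']

theorem eq_zero_or_eq_one_of_mem_extremePoints {h : L → ℝ}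
    (hh : h ∈ (normalizedPolymatroids L).extremePoints ℝ)
    (hcone : h ∈ PointedCone.hull ℝ (zeroOnePolymatroids L)) (x : L) : h x = 0 ∨ h x = 1 := by
  classical
  obtain ⟨c, hc, hc0, hsum⟩ := PointedCone.mem_hull_set.1 hcone
  have hsum_top : ∑ u ∈ c.support, c u * u ⊤ = 1 := by
    rw [← hh.1.2, ← hsum, Finsupp.sum, Finset.sum_apply]
    rfl
  obtain ⟨u, hu, hne⟩ := exists_ne_zero_of_sum_ne_zero (hsum_top ▸ one_ne_zero)
  obtain ⟨hu_poly, hu01⟩ := hc hu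
  have hu_top : u ⊤ = 1 := (hu01 ⊤).resolve_left (right_ne_zero_of_mul hne)
  have hrest : ∑ v ∈ c.support.erase u, c v • v ∈ polymatroidCone L :=
    Submodule.sum_mem _ fun v hv =>
      (polymatroidCone L).smul_mem (hc0 v) (hc (mem_of_mem_erase hv)).1
  have key := eq_smul_of_add_eq_of_mem_extremePoints hh (hu_poly.smul (hc0 u)) hrest
    ((add_sum_erase _ (fun v => c v • v) hu).trans hsum)
  rw [Pi.smul_apply, hu_top, smul_eq_mul, mul_one] at key
  rw [← smul_right_injective _ (left_ne_zero_of_mul hne) key]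
  exact hu01 x

end Polymatroid

namespace LatticeHom

variable {L M : Type*} [Lattice L] [OrderTop L] [Fintype L] [Lattice M] (g : LatticeHom L M)

/-- For `p ≤ g ⊤` this is the least `x` with `p ≤ g x`; otherwise it is `⊤`. -/
noncomputable def ceil (p : M) : L :=
  open scoped Classical in (univ.filter fun x => p ≤ g x).inf id

variable {g}

theorem ceil_le {p : M} {x : L} (hpx : p ≤ g x) : g.ceil p ≤ x := by
  classical
  unfold ceil
  exact inf_le (mem_filter.2 ⟨mem_univ x, hpx⟩)

theorem le_apply_ceil {p : M} (hp : p ≤ g ⊤) : p ≤ g (g.ceil p) := by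
  classical
  unfold ceil
  exact inf_induction (p := fun x => p ≤ g x) hp
    (fun x hx y hy => by rw [map_inf]; exact le_inf hx hy) fun x hx => (mem_filter.1 hx).2

theorem ceil_eq_top {p : M} (hp : ¬p ≤ g ⊤) : g.ceil p = ⊤ := by
  classical
  unfold ceil
  refine (Finset.inf_eq_top_iff _ _).2 fun x hx => absurd ?_ hp
  exact (mem_filter.1 hx).2.trans (OrderHomClass.mono g le_top)

theorem ceil_apply (hg : Injective g) (x : L) : g.ceil (g x) = x := by
  refine le_antisymm (ceil_le le_rfl) (inf_eq_left.1 (hg ?_))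
  rw [map_inf, inf_eq_left]
  exact le_apply_ceil (OrderHomClass.mono g le_top)

theorem ceil_mono : Monotone g.ceil := by
  intro p q hpq
  by_cases hq : q ≤ g ⊤
  · exact ceil_le (hpq.trans (le_apply_ceil hq))
  · rw [ceil_eq_top hq]
    exact le_top

theorem ceil_sup_le (p q : M) : g.ceil (p ⊔ q) ≤ g.ceil p ⊔ g.ceil q := by
  by_cases hp : p ≤ g ⊤
  · by_cases hq : q ≤ g ⊤
    · exact ceil_le (by rw [map_sup]; exact sup_le_sup (le_apply_ceil hp) (le_apply_ceil hq))
    · simp [ceil_eq_top hq]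
  · simp [ceil_eq_top hp]

end LatticeHom

theorem IsPolymatroid.comp_ceil {L M : Type*} [Lattice L] [OrderTop L] [Fintype L] [Lattice M]
    {g : LatticeHom L M} {h : L → ℝ} (hh : IsPolymatroid h) : IsPolymatroid (h ∘ g.ceil) where
  nonneg _ := hh.nonneg _
  mono := hh.mono.comp LatticeHom.ceil_mono
  submodular p q := calc
    h (g.ceil (p ⊔ q)) + h (g.ceil (p ⊓ q))
        ≤ h (g.ceil p ⊔ g.ceil q) + h (g.ceil p ⊓ g.ceil q) :=
      add_le_add (hh.mono (LatticeHom.ceil_sup_le p q)) (hh.mono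
        (le_inf (LatticeHom.ceil_mono inf_le_left) (LatticeHom.ceil_mono inf_le_right)))
    _ ≤ h (g.ceil p) + h (g.ceil q) := hh.submodular _ _

def mixedDiff (Q : ℕ × ℕ → ℝ) (p : ℕ × ℕ) : ℝ :=
  Q (p.1, p.2 + 1) + Q (p.1 + 1, p.2) - Q p - Q (p.1 + 1, p.2 + 1)

theorem mixedDiff_nonneg {Q : ℕ × ℕ → ℝ} (hQ : ∀ p q, Q (p ⊔ q) + Q (p ⊓ q) ≤ Q p + Q q)
    (p : ℕ × ℕ) : 0 ≤ mixedDiff Q p := by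
  have := hQ (p.1, p.2 + 1) (p.1 + 1, p.2)
  simp only [Prod.mk_sup_mk, Prod.mk_inf_mk, le_add_iff_nonneg_right, zero_le, sup_of_le_right,
    sup_of_le_left, inf_of_le_left, inf_of_le_right, Prod.mk.eta] at this
  unfold mixedDiff
  linarith

theorem sum_Icc_mixedDiff (Q : ℕ × ℕ → ℝ) {p q : ℕ × ℕ} (hpq : p ≤ q) :
    ∑ r ∈ Icc p q, mixedDiff Q r =
      Q (p.1, q.2 + 1) + Q (q.1 + 1, p.2) - Q p - Q (q.1 + 1, q.2 + 1) := by
  have hcol (i : ℕ) : ∑ j ∈ Icc p.2 q.2, mixedDiff Q (i, j) =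
      (Q (i + 1, p.2) - Q (i + 1, q.2 + 1)) - (Q (i, p.2) - Q (i, q.2 + 1)) := by
    have hdiff (j : ℕ) : mixedDiff Q (i, j) =
        (Q (i, j + 1) - Q (i + 1, j + 1)) - (Q (i, j) - Q (i + 1, j)) := by
      unfold mixedDiff
      ring
    rw [sum_congr rfl fun j _ => hdiff j, sum_Icc_sub hpq.2 fun j => Q (i, j) - Q (i + 1, j)]
    ring
  rw [Icc_prod_def, sum_product, sum_congr rfl fun i _ => hcol i,
    sum_Icc_sub hpq.1 fun i => Q (i, p.2) - Q (i, q.2 + 1)]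
  ring

section Grid

variable {L : Type*} [Lattice L] [OrderTop L] [Fintype L] {g : LatticeHom L (ℕ × ℕ)}

theorem sum_Icc_mixedDiff_comp_ceil (h : L → ℝ) {p : ℕ × ℕ} (hp : p ≤ g ⊤) :
    ∑ r ∈ Icc p (g ⊤), mixedDiff (h ∘ g.ceil) r = h ⊤ - h (g.ceil p) := by
  have hout (i j : ℕ) (hij : (g ⊤).1 < i ∨ (g ⊤).2 < j) : g.ceil (i, j) = ⊤ :=
    LatticeHom.ceil_eq_top fun hle => by rw [Prod.le_def] at hle; omega
  rw [sum_Icc_mixedDiff _ hp]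
  simp only [comp_apply]
  rw [hout p.1 ((g ⊤).2 + 1) (.inr (by omega)), hout ((g ⊤).1 + 1) p.2 (.inl (by omega)),
    hout ((g ⊤).1 + 1) ((g ⊤).2 + 1) (.inl (by omega))]
  ring

theorem eq_smul_one_add_sum_mixedDiff_smul (hg : Injective g) (h : L → ℝ) :
    h = h (g.ceil ⊥) • 1 +
      ∑ p ∈ Iic (g ⊤), mixedDiff (h ∘ g.ceil) p • {x | g x ≤ p}ᶜ.indicator 1 := by
  classical
  funext x
  have hx : g x ≤ g ⊤ := OrderHomClass.mono g le_top
  have hupper : (Iic (g ⊤)).filter (g x ≤ ·) = Icc (g x) (g ⊤) := by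
    ext p
    simp [and_comm]
  have hbox : Iic (g ⊤) = Icc ⊥ (g ⊤) := by
    ext p
    simp
  have hsplit := sum_filter_add_sum_filter_not (Iic (g ⊤)) (g x ≤ ·) (mixedDiff (h ∘ g.ceil))
  rw [hupper, hbox, sum_Icc_mixedDiff_comp_ceil h hx, sum_Icc_mixedDiff_comp_ceil h bot_le,
    LatticeHom.ceil_apply hg, sum_filter] at hsplit
  simp only [Pi.add_apply, Finset.sum_apply, Pi.smul_apply, smul_eq_mul, Pi.one_apply, mul_one,
    Set.indicator_apply, Set.mem_compl_iff, Set.mem_ofPred_eq, mul_ite, mul_zero, hbox]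
  linarith

theorem IsPolymatroid.mem_hull_zeroOnePolymatroids (hg : Injective g) {h : L → ℝ}
    (hh : IsPolymatroid h) : h ∈ PointedCone.hull ℝ (zeroOnePolymatroids L) := by
  have hone : (1 : L → ℝ) ∈ zeroOnePolymatroids L :=
    ⟨⟨fun _ => zero_le_one, monotone_const, fun _ _ => le_rfl⟩, fun _ => .inr rfl⟩
  have hcorner (p : ℕ × ℕ) : {x | g x ≤ p}ᶜ.indicator 1 ∈ zeroOnePolymatroids L :=
    indicator_compl_mem_zeroOnePolymatroids
      (fun _ _ hyx hx => (OrderHomClass.mono g hyx).trans hx)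
      (fun _ hx _ hy => by simpa only [Set.mem_ofPred_eq, map_sup] using sup_le hx hy)
  rw [eq_smul_one_add_sum_mixedDiff_smul hg h]
  exact add_mem (PointedCone.smul_mem _ (hh.nonneg _) (PointedCone.subset_hull hone))
    (sum_mem fun p _ => PointedCone.smul_mem _ (mixedDiff_nonneg hh.comp_ceil.submodular p)
      (PointedCone.subset_hull (hcorner p)))

end Grid

theorem exists_strictMonoOn_nat {α : Type*} [LinearOrder α] (s : Finset α) :
    ∃ r : α →o ℕ, StrictMonoOn r s :=
  ⟨⟨fun a => #{b ∈ s | b < a}, fun _ _ hab => card_le_card (monotone_filter_right _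
      fun _ _ hb => hb.trans_le hab)⟩,
    fun a ha b hb hab => card_lt_card ((ssubset_iff_of_subset (monotone_filter_right _
      fun _ _ hc => hc.trans hab)).2 ⟨a, mem_filter.2 ⟨ha, hab⟩, by simp⟩)⟩

theorem exists_injective_latticeHom_nat_prod {L α β : Type*} [Lattice L] [Fintype L]
    [LinearOrder α] [LinearOrder β] {f : LatticeHom L (α × β)} (hf : Injective f) :
    ∃ g : LatticeHom L (ℕ × ℕ), Injective g := by
  obtain ⟨r, hr⟩ := exists_strictMonoOn_nat (univ.image fun x => (f x).1)
  obtain ⟨s, hs⟩ := exists_strictMonoOn_nat (univ.image fun x => (f x).2)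
  refine ⟨⟨⟨fun x => (r (f x).1, s (f x).2), fun x y => ?_⟩, fun x y => ?_⟩, fun x y hxy => ?_⟩
  · simp [map_sup]
  · simp [map_inf]
  · simp only [LatticeHom.coe_mk, SupHom.coe_mk, Prod.mk.injEq] at hxy
    have hx := mem_image_of_mem (fun x => (f x).1) (mem_univ x)
    have hy := mem_image_of_mem (fun x => (f x).1) (mem_univ y)
    have hx' := mem_image_of_mem (fun x => (f x).2) (mem_univ x)
    have hy' := mem_image_of_mem (fun x => (f x).2) (mem_univ y)
    exact hf (Prod.ext (hr.injOn hx hy hxy.1) (hs.injOn hx' hy' hxy.2))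

/-- On a finite distributive lattice of order dimension at most 2 (i.e. embeddable
as a sublattice of a product of two chains), every extreme point of the convex set
of normalized polymatroid functions takes only the values 0 and 1. -/
theorem extreme_polymatroid_two_dim {L α β : Type*} [DistribLattice L] [Finite L]
    [OrderTop L] [LinearOrder α] [LinearOrder β]
    (f : L → α × β) (hinj : Function.Injective f)
    (hinf : ∀ x y : L, f (x ⊓ y) = f x ⊓ f y)
    (hsup : ∀ x y : L, f (x ⊔ y) = f x ⊔ f y)
    (h : L → ℝ)
    (hext : h ∈ Set.extremePoints ℝ
      {g : L → ℝ | (∀ x, 0 ≤ g x) ∧ (∀ x y, x ≤ y → g x ≤ g y) ∧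
        (∀ x y, g (x ⊔ y) + g (x ⊓ y) ≤ g x + g y) ∧ g ⊤ = 1}) :
    ∀ x : L, h x = 0 ∨ h x = 1 := by
  have := Fintype.ofFinite L
  let F : LatticeHom L (α × β) := ⟨⟨f, hsup⟩, hinf⟩
  obtain ⟨g, hg⟩ := exists_injective_latticeHom_nat_prod (f := F) hinj
  rw [← normalizedPolymatroids_eq] at hext
  exact eq_zero_or_eq_one_of_mem_extremePoints hext (hext.1.1.mem_hull_zeroOnePolymatroids hg)
end
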